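/- In an n-model, H_{ij+} ∩ Ker P_{(ij)} = D_{j+}, where D_{j+} := Ran q_{j+}: that is, a vector in the span H_{ij} killed by q_{i−} lies in the kernel of the projection P_{(ij)} if and only if it lies in Ran q_{j+}. Consequently H_{ij+} = K_{(ij)} ∔ D_{j+}. -/

import Mathlib

open ContinuousLinearMap

/-- The orthogonal projection onto the closure of a submodule, as an operator `H →L[ℂ] H`. -/
noncomputable def orthProjCl {H : Type*} [NormedAddCommGroup H] [InnerProductSpace ℂ H]
    [CompleteSpace H] (S : Submodule ℂ H) : H →L[ℂ] H :=
  haveI : CompleteSpace S.topologicalClosure :=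
    S.isClosed_topologicalClosure.completeSpace_coe
  S.topologicalClosure.subtypeL ∘L S.topologicalClosure.orthogonalProjectionOnto

section

variable {ι : Type*} [LinearOrder ι]
  {H : Type*} [NormedAddCommGroup H] [InnerProductSpace ℂ H] [CompleteSpace H]
  {E : ι → Type*} [∀ r, NormedAddCommGroup (E r)] [∀ r, InnerProductSpace ℂ (E r)]
  [∀ r, CompleteSpace (E r)]

/-- `q_r = W_r p_r W_r*` -/
noncomputable def qmap (W : ∀ r, E r →L[ℂ] H) (p : ∀ r, E r →L[ℂ] E r) (r : ι) : H →L[ℂ] H :=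
  W r ∘L p r ∘L adjoint (W r)

/-- The model projection `P_{(ij)} = P_{π_i∨…∨π_j}(I − q_{j+})(I − q_{i−})`. -/
noncomputable def Pmodel (W : ∀ r, E r →L[ℂ] H) (pPlus pMinus : ∀ r, E r →L[ℂ] E r)
    (i j : ι) : H →L[ℂ] H :=
  orthProjCl (⨆ r ∈ Set.Icc j i, LinearMap.range (W r : E r →ₗ[ℂ] H)) ∘L
    (1 - qmap W pPlus j) ∘L (1 - qmap W pMinus i)

end

section aux17

variable {H : Type*} [NormedAddCommGroup H] [InnerProductSpace ℂ H] [CompleteSpace H]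

lemma aux17_orthProjCl_mem (S : Submodule ℂ H) (x : H) :
    orthProjCl S x ∈ S.topologicalClosure := by
  haveI : CompleteSpace S.topologicalClosure :=
    S.isClosed_topologicalClosure.completeSpace_coe
  exact (S.topologicalClosure.orthogonalProjectionOnto x).2

lemma aux17_orthProjCl_eq_self (S : Submodule ℂ H) {x : H} (hx : x ∈ S.topologicalClosure) :
    orthProjCl S x = x := by
  haveI : CompleteSpace S.topologicalClosure :=
    S.isClosed_topologicalClosure.completeSpace_coe
  exact Submodule.starProjection_eq_self_iff.mpr hx

lemma aux17_sub_orthProjCl_mem (S : Submodule ℂ H) (x : H) :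
    x - orthProjCl S x ∈ S.topologicalClosureᗮ := by
  haveI : CompleteSpace S.topologicalClosure :=
    S.isClosed_topologicalClosure.completeSpace_coe
  exact Submodule.sub_starProjection_mem_orthogonal x

end aux17

/-- In an n-model, `H_{ij+} ∩ Ker P_{(ij)} = D_{j+}` where
`D_{j+} = Ran q_{j+}`; consequently `H_{ij+} = K_{(ij)} ∔ D_{j+}` (direct sum). -/
theorem model_Hij_ker_Pij
    {ι : Type*} [LinearOrder ι]
    {H : Type*} [NormedAddCommGroup H] [InnerProductSpace ℂ H] [CompleteSpace H]
    {E : ι → Type*} [∀ r, NormedAddCommGroup (E r)] [∀ r, InnerProductSpace ℂ (E r)]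
    [∀ r, CompleteSpace (E r)]
    (W : ∀ r, E r →L[ℂ] H) (pPlus pMinus : ∀ r, E r →L[ℂ] E r)
    (hiso : ∀ r, ∀ x, ‖W r x‖ = ‖x‖)
    (hsum : ∀ r, pPlus r + pMinus r = 1)
    (hidemP : ∀ r, pPlus r ∘L pPlus r = pPlus r)
    (hidemM : ∀ r, pMinus r ∘L pMinus r = pMinus r)
    (hana : ∀ i j, j ≤ i → pMinus i ∘L (adjoint (W i) ∘L W j) ∘L pPlus j = 0)
    (hmod : ∀ i j k, k ≤ j → j ≤ i →
      adjoint (W i) ∘L W k = (adjoint (W i) ∘L W j) ∘L (adjoint (W j) ∘L W k))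
    (i j : ι) (hji : j ≤ i) :
    ((⨆ r ∈ Set.Icc j i, LinearMap.range (W r : E r →ₗ[ℂ] H)).topologicalClosure
          ⊓ LinearMap.ker (qmap W pMinus i : H →ₗ[ℂ] H))
        ⊓ LinearMap.ker (Pmodel W pPlus pMinus i j : H →ₗ[ℂ] H)
      = LinearMap.range (qmap W pPlus j : H →ₗ[ℂ] H)
    ∧ LinearMap.range (Pmodel W pPlus pMinus i j : H →ₗ[ℂ] H)
        ⊓ LinearMap.range (qmap W pPlus j : H →ₗ[ℂ] H) = ⊥
    ∧ LinearMap.range (Pmodel W pPlus pMinus i j : H →ₗ[ℂ] H)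
        ⊔ LinearMap.range (qmap W pPlus j : H →ₗ[ℂ] H)
      = (⨆ r ∈ Set.Icc j i, LinearMap.range (W r : E r →ₗ[ℂ] H)).topologicalClosure
          ⊓ LinearMap.ker (qmap W pMinus i : H →ₗ[ℂ] H) := by
  classical
  set S : Submodule ℂ H := ⨆ r ∈ Set.Icc j i, LinearMap.range (W r : E r →ₗ[ℂ] H) with hSdef
  set M : Submodule ℂ H := S.topologicalClosure with hMdef
  set qp : H →L[ℂ] H := qmap W pPlus j with hqp
  set qm : H →L[ℂ] H := qmap W pMinus i with hqm
  set P : H →L[ℂ] H := Pmodel W pPlus pMinus i j with hP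
  -- W_r*W_r = 1 pointwise
  have hinner : ∀ r (x y : E r), (inner ℂ (W r x) (W r y) : ℂ) = inner ℂ x y := by
    intro r x y
    exact LinearIsometry.inner_map_map ⟨(W r).toLinearMap, hiso r⟩ x y
  have hWW : ∀ r (x : E r), adjoint (W r) (W r x) = x := by
    intro r x
    apply ext_inner_right ℂ
    intro z
    rw [adjoint_inner_left]
    exact hinner r x z
  -- ranges lie in M
  have hrange : ∀ r ∈ Set.Icc j i, LinearMap.range (W r : E r →ₗ[ℂ] H) ≤ M := by
    intro r hr
    refine le_trans ?_ (Submodule.le_topologicalClosure S)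
    exact le_iSup₂ (f := fun r _ => LinearMap.range (W r : E r →ₗ[ℂ] H)) r hr
  have hjmem : j ∈ Set.Icc j i := ⟨le_refl j, hji⟩
  have himem : i ∈ Set.Icc j i := ⟨hji, le_refl i⟩
  have hqpM : ∀ x, qp x ∈ M := fun x => hrange j hjmem ⟨_, rfl⟩
  have hqmM : ∀ x, qm x ∈ M := fun x => hrange i himem ⟨_, rfl⟩
  -- adjoints kill Mᗮ
  have hadjperp : ∀ r ∈ Set.Icc j i, ∀ x ∈ Mᗮ, adjoint (W r) x = 0 := by
    intro r hr x hx
    apply ext_inner_right ℂ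
    intro z
    rw [adjoint_inner_left, inner_zero_left]
    exact (Submodule.mem_orthogonal' M x).mp hx _ (hrange r hr ⟨z, rfl⟩)
  have hqpperp : ∀ x ∈ Mᗮ, qp x = 0 := by
    intro x hx
    show W j (pPlus j (adjoint (W j) x)) = 0
    rw [hadjperp j hjmem x hx, map_zero, map_zero]
  have hqmperp : ∀ x ∈ Mᗮ, qm x = 0 := by
    intro x hx
    show W i (pMinus i (adjoint (W i) x)) = 0
    rw [hadjperp i himem x hx, map_zero, map_zero]
  -- idempotency of qp, qm
  have hqpqp : ∀ x, qp (qp x) = qp x := by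
    intro x
    show W j (pPlus j (adjoint (W j) (W j (pPlus j (adjoint (W j) x))))) =
      W j (pPlus j (adjoint (W j) x))
    rw [hWW]
    congr 1
    rw [← ContinuousLinearMap.comp_apply, hidemP j]
  have hqmqm : ∀ x, qm (qm x) = qm x := by
    intro x
    show W i (pMinus i (adjoint (W i) (W i (pMinus i (adjoint (W i) x))))) =
      W i (pMinus i (adjoint (W i) x))
    rw [hWW]
    congr 1
    rw [← ContinuousLinearMap.comp_apply, hidemM i]
  -- q⁻ q⁺ = 0
  have hqmqp : ∀ x, qm (qp x) = 0 := by
    intro x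
    show W i (pMinus i (adjoint (W i) (W j (pPlus j (adjoint (W j) x))))) = 0
    have h0 : (pMinus i ∘L (adjoint (W i) ∘L W j) ∘L pPlus j) (adjoint (W j) x) = 0 := by
      rw [hana i j hji]; rfl
    simp only [ContinuousLinearMap.comp_apply] at h0
    rw [h0, map_zero]
  -- orthProjCl facts specialized
  have hPMself : ∀ x ∈ M, orthProjCl S x = x := fun x hx => aux17_orthProjCl_eq_self S hx
  have hPMmem : ∀ x, orthProjCl S x ∈ M := fun x => aux17_orthProjCl_mem S x
  have hqpPM : ∀ x, qp (orthProjCl S x) = qp x := by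
    intro x
    have h1 : qp (x - orthProjCl S x) = 0 := hqpperp _ (aux17_sub_orthProjCl_mem S x)
    rw [map_sub, sub_eq_zero] at h1
    exact h1.symm
  have hqmPM : ∀ x, qm (orthProjCl S x) = qm x := by
    intro x
    have h1 : qm (x - orthProjCl S x) = 0 := hqmperp _ (aux17_sub_orthProjCl_mem S x)
    rw [map_sub, sub_eq_zero] at h1
    exact h1.symm
  -- unfolding of P
  have hPapp : ∀ x, P x = orthProjCl S ((x - qm x) - qp (x - qm x)) := by
    intro x
    show Pmodel W pPlus pMinus i j x = _
    simp only [Pmodel, ContinuousLinearMap.comp_apply, ContinuousLinearMap.sub_apply,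
      ContinuousLinearMap.one_apply, ← hqp, ← hqm, ← hSdef]
  -- P kills range qp
  have hPqp : ∀ y, P (qp y) = 0 := by
    intro y
    rw [hPapp]
    rw [hqmqp, sub_zero, hqpqp, sub_self, map_zero]
  -- P x ∈ M
  have hPmem : ∀ x, P x ∈ M := by
    intro x; rw [hPapp]; exact hPMmem _
  -- qm (P x) = 0
  have hqmP : ∀ x, qm (P x) = 0 := by
    intro x
    rw [hPapp, hqmPM, map_sub, map_sub, hqmqm, sub_self, hqmqp, zero_sub, neg_eq_zero]
  -- qp (P x) = 0
  have hqpP : ∀ x, qp (P x) = 0 := by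
    intro x
    rw [hPapp, hqpPM, map_sub, hqpqp, sub_self]
  -- on M ∩ ker qm, P x = x - qp x
  have hPofM : ∀ x, x ∈ M → qm x = 0 → P x = x - qp x := by
    intro x hxM hxker
    rw [hPapp, hxker, sub_zero, map_sub, hPMself x hxM, hPMself _ (hqpM x)]
  -- P idempotent
  have hPP : ∀ x, P (P x) = P x := by
    intro x
    rw [hPofM (P x) (hPmem x) (hqmP x), hqpP, sub_zero]
  -- range qp ⊆ all three
  refine ⟨?_, ?_, ?_⟩
  · apply le_antisymm
    · rintro x ⟨⟨hxM, hxkm⟩, hxkP⟩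
      rw [SetLike.mem_coe, LinearMap.mem_ker] at hxkm hxkP
      have := hPofM x hxM hxkm
      rw [show P x = 0 from hxkP] at this
      have hx : x = qp x := by
        have := this.symm
        rwa [sub_eq_zero] at this
      exact ⟨x, hx.symm⟩
    · rintro x ⟨y, rfl⟩
      exact ⟨⟨hqpM y, LinearMap.mem_ker.mpr (hqmqp y)⟩, LinearMap.mem_ker.mpr (hPqp y)⟩
  · rw [Submodule.eq_bot_iff]
    rintro x ⟨⟨z, hz⟩, ⟨y, hy⟩⟩
    have h1 : P x = x := by rw [← hz]; exact hPP z
    have h2 : P x = 0 := by rw [← hy]; exact hPqp y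
    rw [← h1, h2]
  · apply le_antisymm
    · apply sup_le
      · rintro x ⟨z, rfl⟩
        exact ⟨hPmem z, LinearMap.mem_ker.mpr (hqmP z)⟩
      · rintro x ⟨y, rfl⟩
        exact ⟨hqpM y, LinearMap.mem_ker.mpr (hqmqp y)⟩
    · rintro x ⟨hxM, hxk⟩
      rw [SetLike.mem_coe, LinearMap.mem_ker] at hxk
      refine Submodule.mem_sup.mpr ⟨x - qp x, ⟨x, hPofM x hxM hxk⟩, qp x, ⟨x, rfl⟩, ?_⟩
      abel
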